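/- Let α > 0, X a complex Banach space and T a bounded linear operator on X. Then the following are equivalent: (i) T is (C,α)-bounded, i.e. sup_{n∈ℕ₀} ‖Δ^{-α}𝒯(n)‖ / k^{α+1}(n) < ∞; (ii) there exist M > 0 and a linear map θ from the finitely supported complex sequences into the bounded operators on X such that θ(f*g) = θ(f)∘θ(g) for all finitely supported f, g, θ(e_1) = T, and ‖θ(f)‖ ≤ M·q_α(f) for all finitely supported f. -/

import Mathlib

/-- The Cesàro kernel `k^α(n) = Γ(n+α)/(Γ(α)·Γ(n+1))`. -/
noncomputable def cesK (α : ℝ) (n : ℕ) : ℝ :=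
  Real.Gamma ((n : ℝ) + α) / (Real.Gamma α * Real.Gamma ((n : ℝ) + 1))

/-- The Weyl sum of order `α`: `W^{-α}f(n) = ∑_{j=n}^∞ k^α(j-n)·f(j)`. -/
noncomputable def weylSum (α : ℝ) (f : ℕ → ℂ) : ℕ → ℂ :=
  fun n => ∑ᶠ j : ℕ, (cesK α j : ℂ) * f (j + n)

/-- The forward difference operator `Δh(n) = h(n+1) - h(n)`. -/
def fdiff (f : ℕ → ℂ) : ℕ → ℂ := fun n => f (n + 1) - f n

/-- The Weyl difference of order `α > 0`:
`W^α f(n) = (-1)^m Δ^m W^{-(m-α)} f(n)` with `m = [α]+1`; and `W^0 f = f`. -/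
noncomputable def weylDiff (α : ℝ) (f : ℕ → ℂ) : ℕ → ℂ :=
  if α = 0 then f
  else fun n => (-1 : ℂ) ^ (⌊α⌋₊ + 1) * fdiff^[⌊α⌋₊ + 1] (weylSum ((⌊α⌋₊ : ℝ) + 1 - α) f) n

/-- Convolution of sequences: `(f*g)(n) = ∑_{j=0}^n f(n-j)·g(j)`. -/
noncomputable def conv (f g : ℕ → ℂ) (n : ℕ) : ℂ :=
  ∑ j ∈ Finset.range (n + 1), f (n - j) * g j

/-- `q_α(f) = ∑_{n=0}^∞ k^{α+1}(n)·|W^α f(n)|`. -/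
noncomputable def qA (α : ℝ) (f : ℕ → ℂ) : ℝ :=
  ∑ᶠ n : ℕ, cesK (α + 1) n * ‖weylDiff α f n‖

/-- The Cesàro sum of order `α` of a bounded operator `T`:
`Δ^{-α}𝒯(n) = ∑_{j=0}^n k^α(n-j)·T^j`. -/
noncomputable def cesOp {X : Type*} [NormedAddCommGroup X] [NormedSpace ℂ X]
    (α : ℝ) (T : X →L[ℂ] X) (n : ℕ) : X →L[ℂ] X :=
  ∑ j ∈ Finset.range (n + 1), (cesK α (n - j) : ℂ) • T ^ j

/-- The canonical sequence `e_n(j) = δ_{n,j}`. -/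
def eseq (n : ℕ) : ℕ → ℂ := fun j => if j = n then 1 else 0

/-!
(i) ⇒ (ii): take `θ f = f(T)`, the polynomial calculus, which turns convolution into composition.
Since `W^{-α}` inverts `W^α` and is the transpose of convolution with `k^α`, one gets
`f(T) = ∑ₘ W^α f(m) • Δ^{-α}𝒯(m)`, whence `‖θ f‖ ≤ M q_α(f)`.

(ii) ⇒ (i): `θ(e_j) = T^j` for `j ≥ 1`, so `Δ^{-α}𝒯(n) = θ(W^{-α} e_n) + k^α(n) (1 - θ(e_0))`,
and `q_α(W^{-α} e_n) = k^{α+1}(n)` because `W^α W^{-α} = id`; conclude with `k^α ≤ k^{α+1}`.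

Both inversion formulas `W^α W^{-α} = W^{-α} W^α = id` come from `Δ W^{-1} = -id` and the
semigroup law `W^{-β} W^{-γ} = W^{-(β+γ)}`, which is Chu–Vandermonde for `k^β(n) = multichoose β n`.
-/

open Finset Polynomial Function

lemma Ring.multichoose_add {R : Type*} [CommRing R] [BinomialRing R] (r s : R) (n : ℕ) :
    Ring.multichoose (r + s) n =
      ∑ ij ∈ antidiagonal n, Ring.multichoose r ij.1 * Ring.multichoose s ij.2 := by
  have h := Ring.add_choose_eq n (Commute.all (-r) (-s))
  rw [← neg_add, Ring.choose_neg'] at h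
  have hsum : ∀ ij ∈ antidiagonal n, Ring.choose (-r) ij.1 * Ring.choose (-s) ij.2 =
      Int.negOnePow n • (Ring.multichoose r ij.1 * Ring.multichoose s ij.2) := by
    intro ij hij
    rw [← mem_antidiagonal.mp hij, Ring.choose_neg', Ring.choose_neg', Nat.cast_add,
      Int.negOnePow_add, smul_mul_smul_comm]
  rwa [sum_congr rfl hsum, ← smul_sum, smul_left_cancel_iff] at h

lemma Real.Gamma_natCast_add {β : ℝ} (hβ : 0 < β) (n : ℕ) :
    Real.Gamma (n + β) = (ascPochhammer ℝ n).eval β * Real.Gamma β := by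
  induction n with
  | zero => simp
  | succ n ih =>
    rw [Nat.cast_succ, add_right_comm, Real.Gamma_add_one (by positivity : (n : ℝ) + β ≠ 0), ih,
      ascPochhammer_succ_eval]
    ring

section CesaroKernel

variable {β γ : ℝ}

lemma cesK_pos (hβ : 0 < β) (n : ℕ) : 0 < cesK β n := by
  have := Real.Gamma_pos_of_pos hβ
  have := Real.Gamma_pos_of_pos (by positivity : 0 < (n : ℝ) + β)
  have := Real.Gamma_pos_of_pos (by positivity : 0 < (n : ℝ) + 1)
  unfold cesK
  positivity

lemma cesK_eq_multichoose (hβ : 0 < β) (n : ℕ) : cesK β n = Ring.multichoose β n := by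
  have hfac : (n.factorial : ℝ) * Ring.multichoose β n = (ascPochhammer ℝ n).eval β := by
    rw [← nsmul_eq_mul, Ring.factorial_nsmul_multichoose_eq_ascPochhammer,
      ascPochhammer_smeval_eq_eval]
  rw [← Real.Gamma_nat_eq_factorial] at hfac
  have := Real.Gamma_pos_of_pos hβ
  have := Real.Gamma_pos_of_pos (by positivity : 0 < (n : ℝ) + 1)
  rw [cesK, Real.Gamma_natCast_add hβ, ← hfac]
  field_simp

lemma cesK_one (n : ℕ) : cesK 1 n = 1 := by
  rw [cesK_eq_multichoose one_pos, Ring.multichoose_one]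

lemma sum_cesK_mul_cesK (hβ : 0 < β) (hγ : 0 < γ) (m : ℕ) :
    ∑ j ∈ range (m + 1), cesK β j * cesK γ (m - j) = cesK (β + γ) m := by
  simp only [cesK_eq_multichoose (add_pos hβ hγ), Ring.multichoose_add,
    Nat.sum_antidiagonal_eq_sum_range_succ (fun i j => Ring.multichoose β i * Ring.multichoose γ j),
    cesK_eq_multichoose hβ, cesK_eq_multichoose hγ]

lemma cesK_le_cesK_add_one (hβ : 0 < β) (n : ℕ) : cesK β n ≤ cesK (β + 1) n := by
  rw [← sum_cesK_mul_cesK hβ one_pos]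
  simp only [cesK_one, mul_one]
  exact single_le_sum (fun j _ => (cesK_pos hβ j).le) (self_mem_range_succ n)

end CesaroKernel

def VanishesFrom (N : ℕ) (f : ℕ → ℂ) : Prop := ∀ n, N ≤ n → f n = 0

lemma Function.HasFiniteSupport.exists_vanishesFrom {f : ℕ → ℂ} (hf : f.HasFiniteSupport) :
    ∃ N, VanishesFrom N f := by
  obtain ⟨b, hb⟩ := hf.bddAbove
  exact ⟨b + 1, fun n hn => notMem_support.mp fun h => by have := hb h; omega⟩

namespace VanishesFrom

variable {N : ℕ} {f : ℕ → ℂ}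

lemma hasFiniteSupport (hf : VanishesFrom N f) : f.HasFiniteSupport :=
  (Set.finite_Iio N).subset fun n hn => by by_contra h; exact hn (hf n (not_lt.mp h))

lemma fdiff (hf : VanishesFrom N f) : VanishesFrom N (fdiff f) := by
  intro n hn
  simp only [_root_.fdiff, hf n hn, hf (n + 1) (by omega), sub_zero]

lemma iterate_fdiff (hf : VanishesFrom N f) (k : ℕ) : VanishesFrom N (_root_.fdiff^[k] f) := by
  induction k with
  | zero => exact hf
  | succ k ih => rw [iterate_succ_apply']; exact ih.fdiff

end VanishesFrom

lemma vanishesFrom_eseq (n : ℕ) : VanishesFrom (n + 1) (eseq n) :=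
  fun m hm => if_neg (by omega)

lemma iterate_fdiff_smul (c : ℂ) (g : ℕ → ℂ) (k : ℕ) : fdiff^[k] (c • g) = c • fdiff^[k] g := by
  induction k generalizing g with
  | zero => rfl
  | succ k ih =>
    rw [iterate_succ_apply, iterate_succ_apply, ← ih]
    congr 1
    funext n
    simp only [fdiff, Pi.smul_apply, smul_eq_mul, mul_sub]

section WeylSum

variable {N : ℕ} {f : ℕ → ℂ}

lemma weylSum_eq_sum (β : ℝ) (hf : VanishesFrom N f) {n K : ℕ} (hK : N ≤ K + n) :
    weylSum β f n = ∑ j ∈ range K, (cesK β j : ℂ) * f (j + n) := by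
  refine finsum_eq_sum_of_support_subset _ fun j hj => ?_
  rw [coe_range, Set.mem_Iio]
  by_contra h
  simp [hf (j + n) (by omega)] at hj

lemma VanishesFrom.weylSum (hf : VanishesFrom N f) (β : ℝ) : VanishesFrom N (weylSum β f) :=
  fun n hn => by rw [weylSum_eq_sum β hf (K := 0) (by omega), sum_range_zero]

lemma weylSum_smul (β : ℝ) (c : ℂ) (f : ℕ → ℂ) : weylSum β (c • f) = c • weylSum β f := by
  funext n
  simp only [weylSum, Pi.smul_apply]
  rw [smul_finsum]
  simp only [smul_eq_mul, mul_left_comm c]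

lemma weylSum_add_apply (β : ℝ) (f : ℕ → ℂ) (i n : ℕ) :
    weylSum β f (i + n) = weylSum β (fun j => f (j + n)) i := by
  simp only [weylSum, add_assoc]

lemma fdiff_weylSum (β : ℝ) (hf : VanishesFrom N f) :
    fdiff (weylSum β f) = weylSum β (fdiff f) := by
  funext n
  rw [fdiff, weylSum_eq_sum β hf (K := N) (by omega), weylSum_eq_sum β hf (K := N) (by omega),
    weylSum_eq_sum β hf.fdiff (K := N) (by omega), ← sum_sub_distrib]
  refine sum_congr rfl fun j _ => ?_
  rw [fdiff, ← add_assoc, mul_sub]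

lemma iterate_fdiff_weylSum (β : ℝ) (hf : VanishesFrom N f) (k : ℕ) :
    fdiff^[k] (weylSum β f) = weylSum β (fdiff^[k] f) := by
  induction k with
  | zero => rfl
  | succ k ih => rw [iterate_succ_apply', ih, fdiff_weylSum β (hf.iterate_fdiff k),
      iterate_succ_apply']

lemma fdiff_weylSum_one (hf : VanishesFrom N f) : fdiff (weylSum 1 f) = -f := by
  funext n
  rw [fdiff_weylSum 1 hf, weylSum_eq_sum 1 hf.fdiff (K := N) (by omega)]
  simp only [cesK_one, Complex.ofReal_one, one_mul, fdiff, add_right_comm _ n 1]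
  rw [sum_range_sub (fun j => f (j + n)), hf (N + n) (by omega), zero_add, zero_sub, Pi.neg_apply]

/-- `W^{-β}` is the transpose of convolution with `k^β`. -/
lemma sum_weylSum_smul {E : Type*} [AddCommGroup E] [Module ℂ E] (β : ℝ)
    (hf : VanishesFrom N f) (v : ℕ → E) :
    ∑ n ∈ range N, weylSum β f n • v n =
      ∑ m ∈ range N, f m • ∑ j ∈ range (m + 1), (cesK β (m - j) : ℂ) • v j := by
  calc ∑ n ∈ range N, weylSum β f n • v n
      = ∑ n ∈ range N, ∑ j ∈ range (N - n), ((cesK β j : ℂ) * f (j + n)) • v n := by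
        refine sum_congr rfl fun n _ => ?_
        rw [weylSum_eq_sum β hf (K := N - n) (by omega), sum_smul]
    _ = ∑ m ∈ range N, ∑ j ∈ range (m + 1), ((cesK β (m - j) : ℂ) * f (m - j + j)) • v j :=
        (sum_range_diag_flip N fun n j => ((cesK β j : ℂ) * f (j + n)) • v n).symm
    _ = _ := by
        refine sum_congr rfl fun m _ => ?_
        rw [smul_sum]
        refine sum_congr rfl fun j hj => ?_
        rw [Nat.sub_add_cancel (Nat.le_of_lt_succ (mem_range.mp hj)), mul_comm, mul_smul]

lemma weylSum_weylSum {β γ : ℝ} (hβ : 0 < β) (hγ : 0 < γ) (hf : VanishesFrom N f) :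
    weylSum β (weylSum γ f) = weylSum (β + γ) f := by
  funext n
  have hg : VanishesFrom N fun j => f (j + n) := fun j hj => hf _ (by omega)
  calc weylSum β (weylSum γ f) n
      = ∑ i ∈ range N, weylSum γ (fun j => f (j + n)) i • (cesK β i : ℂ) := by
        rw [weylSum_eq_sum β (hf.weylSum γ) (K := N) (by omega)]
        simp only [weylSum_add_apply, smul_eq_mul, mul_comm]
    _ = ∑ m ∈ range N, f (m + n) • ∑ i ∈ range (m + 1), (cesK γ (m - i) : ℂ) • (cesK β i : ℂ) :=
        sum_weylSum_smul γ hg _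
    _ = ∑ m ∈ range N, (cesK (β + γ) m : ℂ) * f (m + n) := by
        refine sum_congr rfl fun m _ => ?_
        rw [← sum_cesK_mul_cesK hβ hγ m]
        push_cast
        simp only [smul_eq_mul, mul_comm]
    _ = weylSum (β + γ) f n := (weylSum_eq_sum _ hf (by omega)).symm

lemma iterate_fdiff_weylSum_natCast (hf : VanishesFrom N f) {m : ℕ} (hm : 1 ≤ m) :
    fdiff^[m] (weylSum m f) = (-1 : ℂ) ^ m • f := by
  induction m, hm using Nat.le_induction with
  | base => simpa using fdiff_weylSum_one hf
  | succ m hm ih =>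
    have hsplit : weylSum ((m + 1 : ℕ) : ℝ) f = weylSum 1 (weylSum m f) := by
      rw [weylSum_weylSum one_pos (by exact_mod_cast hm) hf, Nat.cast_succ, add_comm]
    rw [hsplit, iterate_succ_apply, fdiff_weylSum_one (hf.weylSum _), ← neg_one_smul ℂ,
      iterate_fdiff_smul, ih, smul_smul, pow_succ']

lemma weylSum_eseq (β : ℝ) (n : ℕ) :
    weylSum β (eseq n) = ∑ j ∈ range (n + 1), (cesK β (n - j) : ℂ) • eseq j := by
  funext i
  rw [weylSum_eq_sum β (vanishesFrom_eseq n) (K := n + 1) (by omega), Finset.sum_apply]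
  simp only [eseq, Pi.smul_apply, smul_eq_mul, mul_ite, mul_one, mul_zero]
  rw [sum_ite_eq]
  split_ifs with hi
  · have hi := mem_range.mp hi
    rw [sum_eq_single_of_mem (n - i) (mem_range.mpr (by omega)) fun j _ hj => if_neg (by omega),
      if_pos (by omega)]
  · exact sum_eq_zero fun j hj => if_neg (by have := mem_range.mp hj; rw [mem_range] at hi; omega)

end WeylSum

section WeylDiff

variable {α : ℝ} {N : ℕ} {f : ℕ → ℂ}

lemma weylDiff_of_pos (hα : 0 < α) (f : ℕ → ℂ) :
    weylDiff α f = (-1 : ℂ) ^ (⌊α⌋₊ + 1) • fdiff^[⌊α⌋₊ + 1] (weylSum ((⌊α⌋₊ : ℝ) + 1 - α) f) := by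
  rw [weylDiff, if_neg hα.ne']
  rfl

lemma VanishesFrom.weylDiff (hα : 0 < α) (hf : VanishesFrom N f) :
    VanishesFrom N (weylDiff α f) := by
  intro n hn
  rw [weylDiff_of_pos hα, Pi.smul_apply, (hf.weylSum _).iterate_fdiff _ n hn, smul_zero]

lemma weylSum_weylDiff (hα : 0 < α) (hf : VanishesFrom N f) : weylSum α (weylDiff α f) = f := by
  have hm : α + ((⌊α⌋₊ : ℝ) + 1 - α) = ((⌊α⌋₊ + 1 : ℕ) : ℝ) := by push_cast; ring
  rw [weylDiff_of_pos hα, weylSum_smul, ← iterate_fdiff_weylSum _ (hf.weylSum _),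
    weylSum_weylSum hα (sub_pos.mpr (Nat.lt_floor_add_one α)) hf, hm,
    iterate_fdiff_weylSum_natCast hf (by omega), smul_smul, ← mul_pow]
  norm_num

lemma weylDiff_weylSum (hα : 0 < α) (hf : VanishesFrom N f) : weylDiff α (weylSum α f) = f := by
  have hm : (⌊α⌋₊ : ℝ) + 1 - α + α = ((⌊α⌋₊ + 1 : ℕ) : ℝ) := by push_cast; ring
  rw [weylDiff_of_pos hα, weylSum_weylSum (sub_pos.mpr (Nat.lt_floor_add_one α)) hα hf, hm,
    iterate_fdiff_weylSum_natCast hf (by omega), smul_smul, ← mul_pow]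
  norm_num

lemma qA_eq_sum (hα : 0 < α) (hf : VanishesFrom N f) :
    qA α f = ∑ n ∈ range N, cesK (α + 1) n * ‖weylDiff α f n‖ := by
  refine finsum_eq_sum_of_support_subset _ fun n hn => ?_
  rw [coe_range, Set.mem_Iio]
  by_contra h
  simp [(hf.weylDiff hα) n (by omega)] at hn

lemma qA_weylSum_eseq (hα : 0 < α) (n : ℕ) : qA α (weylSum α (eseq n)) = cesK (α + 1) n := by
  rw [qA, weylDiff_weylSum hα (vanishesFrom_eseq n), finsum_eq_single _ n fun m hm => by
    simp [eseq, hm]]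
  simp [eseq]

end WeylDiff

-- The `finsum` is junk (`0`) unless `f` has finite support.
noncomputable def toPoly (f : ℕ → ℂ) : ℂ[X] := ∑ᶠ n, monomial n (f n)

section Polynomial

variable {N : ℕ} {f g : ℕ → ℂ}

lemma toPoly_eq_sum (hf : VanishesFrom N f) : toPoly f = ∑ n ∈ range N, monomial n (f n) := by
  refine finsum_eq_sum_of_support_subset _ fun n hn => ?_
  rw [coe_range, Set.mem_Iio]
  by_contra h
  simp [hf n (by omega)] at hn

lemma coeff_toPoly (hf : f.HasFiniteSupport) (n : ℕ) : (toPoly f).coeff n = f n := by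
  obtain ⟨N, hN⟩ := hf.exists_vanishesFrom
  rw [toPoly_eq_sum hN, finsetSum_coeff]
  simp only [coeff_monomial, sum_ite_eq', mem_range, ite_eq_left_iff, not_lt]
  exact fun h => (hN n h).symm

lemma toPoly_add (hf : f.HasFiniteSupport) (hg : g.HasFiniteSupport) :
    toPoly (f + g) = toPoly f + toPoly g := by
  ext n
  rw [coeff_add, coeff_toPoly hf, coeff_toPoly hg, coeff_toPoly (hf.add hg), Pi.add_apply]

lemma toPoly_smul (c : ℂ) (f : ℕ → ℂ) : toPoly (c • f) = c • toPoly f := by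
  simp only [toPoly, smul_finsum, Pi.smul_apply, smul_monomial]

lemma VanishesFrom.conv {M : ℕ} (hf : VanishesFrom N f) (hg : VanishesFrom M g) :
    VanishesFrom (N + M) (conv f g) := by
  intro n hn
  refine sum_eq_zero fun j hj => ?_
  rcases lt_or_ge j M with h | h
  · rw [hf (n - j) (by omega), zero_mul]
  · rw [hg j h, mul_zero]

lemma toPoly_conv (hf : f.HasFiniteSupport) (hg : g.HasFiniteSupport) :
    toPoly (conv f g) = toPoly f * toPoly g := by
  obtain ⟨N, hN⟩ := hf.exists_vanishesFrom
  obtain ⟨M, hM⟩ := hg.exists_vanishesFrom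
  ext n
  rw [coeff_toPoly (hN.conv hM).hasFiniteSupport, mul_comm, coeff_mul,
    Nat.sum_antidiagonal_eq_sum_range_succ fun i j => (toPoly g).coeff i * (toPoly f).coeff j]
  simp only [coeff_toPoly hf, coeff_toPoly hg, conv, mul_comm]

lemma toPoly_eseq (n : ℕ) : toPoly (eseq n) = X ^ n := by
  ext m
  rw [coeff_toPoly (vanishesFrom_eseq n).hasFiniteSupport, coeff_X_pow, eseq]

lemma conv_eseq (a b : ℕ) : conv (eseq a) (eseq b) = eseq (a + b) := by
  funext n
  have h := (vanishesFrom_eseq a).conv (vanishesFrom_eseq b)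
  rw [← coeff_toPoly h.hasFiniteSupport, ← coeff_toPoly (vanishesFrom_eseq _).hasFiniteSupport,
    toPoly_conv (vanishesFrom_eseq a).hasFiniteSupport (vanishesFrom_eseq b).hasFiniteSupport,
    toPoly_eseq, toPoly_eseq, toPoly_eseq, pow_add]

lemma aeval_toPoly {A : Type*} [Semiring A] [Algebra ℂ A] (a : A) (hf : VanishesFrom N f) :
    aeval a (toPoly f) = ∑ n ∈ range N, f n • a ^ n := by
  simp only [toPoly_eq_sum hf, map_sum, aeval_monomial, Algebra.smul_def]

end Polynomial

section FunctionalCalculus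

variable {X : Type*} [NormedAddCommGroup X] [NormedSpace ℂ X] {α M : ℝ} {T : X →L[ℂ] X}

lemma aeval_toPoly_eq_sum_cesOp (hα : 0 < α) {N : ℕ} {f : ℕ → ℂ}
    (hf : VanishesFrom N f) :
    aeval T (toPoly f) = ∑ m ∈ range N, weylDiff α f m • cesOp α T m := by
  rw [aeval_toPoly T hf]
  conv_lhs => rw [← weylSum_weylDiff hα hf]
  exact sum_weylSum_smul α (hf.weylDiff hα) _

lemma norm_aeval_toPoly_le (hα : 0 < α)
    (hT : ∀ n, ‖cesOp α T n‖ ≤ M * cesK (α + 1) n) {f : ℕ → ℂ} (hf : f.HasFiniteSupport) :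
    ‖aeval T (toPoly f)‖ ≤ M * qA α f := by
  obtain ⟨N, hN⟩ := hf.exists_vanishesFrom
  rw [aeval_toPoly_eq_sum_cesOp hα hN, qA_eq_sum hα hN, mul_sum]
  refine (norm_sum_le _ _).trans (sum_le_sum fun m _ => ?_)
  calc ‖weylDiff α f m • cesOp α T m‖ ≤ ‖weylDiff α f m‖ * (M * cesK (α + 1) m) :=
        (norm_smul_le _ _).trans (mul_le_mul_of_nonneg_left (hT m) (norm_nonneg _))
    _ = M * (cesK (α + 1) m * ‖weylDiff α f m‖) := by ring

end FunctionalCalculus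

structure IsFinSuppAlgHom {A : Type*} [Ring A] [Module ℂ A] (θ : (ℕ → ℂ) → A) : Prop where
  map_add : ∀ f g : ℕ → ℂ, f.HasFiniteSupport → g.HasFiniteSupport → θ (f + g) = θ f + θ g
  map_smul : ∀ (a : ℂ) (f : ℕ → ℂ), f.HasFiniteSupport → θ (a • f) = a • θ f
  map_conv : ∀ f g : ℕ → ℂ, f.HasFiniteSupport → g.HasFiniteSupport →
    θ (conv f g) = θ f * θ g

lemma isFinSuppAlgHom_aeval_toPoly {A : Type*} [Ring A] [Algebra ℂ A] (a : A) :
    IsFinSuppAlgHom fun f => aeval a (toPoly f) where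
  map_add _ _ hf hg := by simp only [toPoly_add hf hg, map_add]
  map_smul _ _ _ := by simp only [toPoly_smul, map_smul]
  map_conv _ _ hf hg := by simp only [toPoly_conv hf hg, map_mul]

namespace IsFinSuppAlgHom

variable {A : Type*} [Ring A] [Module ℂ A] {θ : (ℕ → ℂ) → A}

lemma map_sum_smul (hθ : IsFinSuppAlgHom θ) {ι : Type*} (s : Finset ι) (c : ι → ℂ)
    {g : ι → ℕ → ℂ} (hg : ∀ i, (g i).HasFiniteSupport) :
    θ (∑ i ∈ s, c i • g i) = ∑ i ∈ s, c i • θ (g i) := by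
  have hcg (i : ι) : (c i • g i).HasFiniteSupport := .smul_right (fun _ => c i) (hg i)
  induction s using Finset.cons_induction with
  | empty => simpa using hθ.map_smul 0 0 (by fun_prop)
  | cons i s hi ih =>
    rw [sum_cons, sum_cons, hθ.map_add _ _ (hcg i) (by rw [sum_fn]; exact .sum hcg s),
      hθ.map_smul _ _ (hg i), ih]

lemma map_eseq (hθ : IsFinSuppAlgHom θ) {j : ℕ} (hj : 1 ≤ j) : θ (eseq j) = θ (eseq 1) ^ j := by
  induction j, hj using Nat.le_induction with
  | base => rw [pow_one]
  | succ j _ ih =>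
    rw [add_comm, ← conv_eseq, hθ.map_conv _ _ (vanishesFrom_eseq 1).hasFiniteSupport
      (vanishesFrom_eseq j).hasFiniteSupport, ih, ← pow_succ', add_comm]

/-- Nothing forces `θ (eseq 0) = 1`, hence the correction term. -/
lemma cesOp_eq {X : Type*} [NormedAddCommGroup X] [NormedSpace ℂ X]
    {θ : (ℕ → ℂ) → (X →L[ℂ] X)} (hθ : IsFinSuppAlgHom θ) (α : ℝ) (n : ℕ) :
    cesOp α (θ (eseq 1)) n = θ (weylSum α (eseq n)) + (cesK α n : ℂ) • (1 - θ (eseq 0)) := by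
  have hpow (j : ℕ) : θ (eseq (j + 1)) = θ (eseq 1) ^ (j + 1) := hθ.map_eseq (by omega)
  rw [weylSum_eseq, hθ.map_sum_smul _ _ fun j => (vanishesFrom_eseq j).hasFiniteSupport, cesOp,
    sum_range_succ', sum_range_succ']
  simp only [← hpow, pow_zero, Nat.sub_zero, smul_sub]
  abel

theorem norm_cesOp_le {X : Type*} [NormedAddCommGroup X] [NormedSpace ℂ X]
    {θ : (ℕ → ℂ) → (X →L[ℂ] X)} (hθ : IsFinSuppAlgHom θ) {α M : ℝ} (hα : 0 < α)
    (hbound : ∀ f : ℕ → ℂ, f.HasFiniteSupport → ‖θ f‖ ≤ M * qA α f) (n : ℕ) :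
    ‖cesOp α (θ (eseq 1)) n‖ ≤ (M + ‖1 - θ (eseq 0)‖) * cesK (α + 1) n := by
  have hθn := hbound _ ((vanishesFrom_eseq n).weylSum α).hasFiniteSupport
  rw [qA_weylSum_eseq hα] at hθn
  rw [hθ.cesOp_eq]
  calc _ ≤ ‖θ (weylSum α (eseq n))‖ + cesK α n * ‖1 - θ (eseq 0)‖ := by
        refine (norm_add_le _ _).trans_eq ?_
        rw [norm_smul, Complex.norm_real, Real.norm_of_nonneg (cesK_pos hα n).le]
    _ ≤ M * cesK (α + 1) n + cesK (α + 1) n * ‖1 - θ (eseq 0)‖ :=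
        add_le_add hθn (mul_le_mul_of_nonneg_right (cesK_le_cesK_add_one hα n) (norm_nonneg _))
    _ = _ := by ring

end IsFinSuppAlgHom

theorem stmt17_general {X : Type*} [NormedAddCommGroup X] [NormedSpace ℂ X]
    (α : ℝ) (hα : 0 < α) (T : X →L[ℂ] X) :
    (∃ M : ℝ, ∀ n : ℕ, ‖cesOp α T n‖ ≤ M * cesK (α + 1) n) ↔
      (∃ M : ℝ, 0 < M ∧ ∃ θ : (ℕ → ℂ) → (X →L[ℂ] X),
        (∀ f g : ℕ → ℂ, (Function.support f).Finite → (Function.support g).Finite →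
          θ (f + g) = θ f + θ g) ∧
        (∀ (a : ℂ) (f : ℕ → ℂ), (Function.support f).Finite → θ (a • f) = a • θ f) ∧
        (∀ f g : ℕ → ℂ, (Function.support f).Finite → (Function.support g).Finite →
          θ (fun n => conv f g n) = θ f * θ g) ∧
        θ (eseq 1) = T ∧
        (∀ f : ℕ → ℂ, (Function.support f).Finite → ‖θ f‖ ≤ M * qA α f)) := by
  constructor
  · rintro ⟨M, hM⟩
    have hM' (n : ℕ) : ‖cesOp α T n‖ ≤ max M 1 * cesK (α + 1) n :=
      (hM n).trans (mul_le_mul_of_nonneg_right (le_max_left M 1) (cesK_pos (by linarith) n).le)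
    obtain ⟨hadd, hsmul, hconv⟩ := isFinSuppAlgHom_aeval_toPoly T
    exact ⟨max M 1, by positivity, fun f => aeval T (toPoly f), hadd, hsmul, hconv,
      by simp only [toPoly_eseq, pow_one, aeval_X], fun f hf => norm_aeval_toPoly_le hα hM' hf⟩
  · rintro ⟨M, -, θ, hadd, hsmul, hconv, rfl, hbound⟩
    exact ⟨_, IsFinSuppAlgHom.norm_cesOp_le ⟨hadd, hsmul, hconv⟩ hα hbound⟩

theorem stmt17 {X : Type*} [NormedAddCommGroup X] [NormedSpace ℂ X] [CompleteSpace X]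
    (α : ℝ) (hα : 0 < α) (T : X →L[ℂ] X) :
    (∃ M : ℝ, ∀ n : ℕ, ‖cesOp α T n‖ ≤ M * cesK (α + 1) n) ↔
      (∃ M : ℝ, 0 < M ∧ ∃ θ : (ℕ → ℂ) → (X →L[ℂ] X),
        (∀ f g : ℕ → ℂ, (Function.support f).Finite → (Function.support g).Finite →
          θ (f + g) = θ f + θ g) ∧
        (∀ (a : ℂ) (f : ℕ → ℂ), (Function.support f).Finite → θ (a • f) = a • θ f) ∧
        (∀ f g : ℕ → ℂ, (Function.support f).Finite → (Function.support g).Finite →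
          θ (fun n => conv f g n) = θ f * θ g) ∧
        θ (eseq 1) = T ∧
        (∀ f : ℕ → ℂ, (Function.support f).Finite → ‖θ f‖ ≤ M * qA α f)) :=
  stmt17_general α hα T
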